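/- If a field K is not algebraically closed, then for every n ≥ 2 there exists a homogeneous polynomial in n variables over K whose only zero in K^n is (0,...,0). In particular there exists a binary form s ∈ K[x,y] with no zero in K² other than (0,0). -/

import Mathlib

/-!
A polynomial of positive degree without roots in `K` homogenizes to a binary form `s` whose only
zero is `(0, 0)`. If `p` is a form in `n` variables of degree `e` with only the trivial zero, then
`s(p(x₁, …, xₙ), xₙ₊₁ ^ e)` is a form in `n + 1` variables with only the trivial zero: a zero
forces both arguments of `s` to vanish.
-/

open MvPolynomial

namespace MvPolynomial

variable {σ ι R : Type*} [CommSemiring R]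

def IsAnisotropic (p : MvPolynomial σ R) : Prop :=
  ∀ v : σ → R, eval v p = 0 → v = 0

lemma IsAnisotropic.bind₁ {s : MvPolynomial ι R} (hs : s.IsAnisotropic)
    {g : ι → MvPolynomial σ R} (hg : ∀ v : σ → R, (∀ i, eval v (g i) = 0) → v = 0) :
    (bind₁ g s).IsAnisotropic := fun v hv ↦
  hg v fun i ↦ congrFun (hs _ <| (eval₂Hom_bind₁ _ _ _ _).symm.trans hv) i

lemma isAnisotropic_X [Subsingleton σ] (i : σ) : (X i : MvPolynomial σ R).IsAnisotropic :=
  fun v hv ↦ by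
    ext j
    simpa [Subsingleton.elim j i] using hv

end MvPolynomial

namespace Polynomial

lemma eval_homogenize_of_eq_zero {R : Type*} [CommSemiring R] (p : R[X]) (n : ℕ)
    (x : Fin 2 → R) (hx : x 1 = 0) :
    MvPolynomial.eval x (p.homogenize n) = p.coeff n * x 0 ^ n := by
  rw [homogenize, map_sum, Finset.sum_eq_single (n, 0)]
  · simp [MvPolynomial.eval_monomial, Finsupp.prod_fintype]
  · rintro ⟨k, l⟩ hkl hne
    have hl : l ≠ 0 := by
      rintro rfl
      simp_all
    simp [MvPolynomial.eval_monomial, Finsupp.prod_fintype, hx, hl]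
  · simp

lemma isAnisotropic_homogenize {K : Type*} [Field K] {p : K[X]}
    (hp : ∀ a, p.eval a ≠ 0) : (p.homogenize p.natDegree).IsAnisotropic := by
  have hp0 : p ≠ 0 := by
    rintro rfl
    exact hp 0 eval_zero
  intro x hx
  by_cases hx1 : x 1 = 0
  · rw [eval_homogenize_of_eq_zero _ _ _ hx1, coeff_natDegree] at hx
    have hx0 : x 0 = 0 :=
      eq_zero_of_pow_eq_zero ((mul_eq_zero.mp hx).resolve_left (leadingCoeff_ne_zero.mpr hp0))
    ext i
    fin_cases i <;> assumption
  · rw [eval_homogenize le_rfl _ hx1] at hx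
    exact absurd hx (mul_ne_zero (hp _) (pow_ne_zero _ hx1))

end Polynomial

lemma exists_eval_ne_zero_of_not_isAlgClosed {K : Type*} [Field K] (h : ¬ IsAlgClosed K) :
    ∃ p : Polynomial K, 0 < p.natDegree ∧ ∀ a, p.eval a ≠ 0 := by
  contrapose! h
  exact IsAlgClosed.of_exists_root K fun p _ hirr ↦ h p hirr.natDegree_pos

lemma exists_isHomogeneous_isAnisotropic_binary {K : Type*} [Field K] (h : ¬ IsAlgClosed K) :
    ∃ (s : MvPolynomial (Fin 2) K) (d : ℕ), 0 < d ∧ s.IsHomogeneous d ∧ s.IsAnisotropic := by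
  obtain ⟨p, hdeg, hp⟩ := exists_eval_ne_zero_of_not_isAlgClosed h
  exact ⟨_, _, hdeg, p.isHomogeneous_homogenize, p.isAnisotropic_homogenize hp⟩

lemma exists_isHomogeneous_isAnisotropic_succ {K : Type*} [Field K] {n d e : ℕ}
    {s : MvPolynomial (Fin 2) K} (hd : 0 < d) (hs : s.IsHomogeneous d) (hsa : s.IsAnisotropic)
    {p : MvPolynomial (Fin n) K} (he : 0 < e) (hp : p.IsHomogeneous e) (hpa : p.IsAnisotropic) :
    ∃ (q : MvPolynomial (Fin (n + 1)) K) (f : ℕ), 0 < f ∧ q.IsHomogeneous f ∧ q.IsAnisotropic := by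
  set g : Fin 2 → MvPolynomial (Fin (n + 1)) K := ![rename Fin.castSucc p, X (Fin.last n) ^ e]
  have hg : ∀ i, (g i).IsHomogeneous e := by
    intro i
    fin_cases i
    · exact hp.rename_isHomogeneous
    · simpa [g] using (isHomogeneous_X K (Fin.last n)).pow e
  refine ⟨bind₁ g s, e * d, Nat.mul_pos he hd, hs.aeval g hg, hsa.bind₁ fun v hv ↦ ?_⟩
  have hinit : v ∘ Fin.castSucc = 0 := hpa _ <| by simpa [g, eval_rename] using hv 0
  have hlast : v (Fin.last n) = 0 := eq_zero_of_pow_eq_zero <| by simpa [g] using hv 1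
  ext i
  induction i using Fin.lastCases with
  | last => exact hlast
  | cast j => exact congrFun hinit j

lemma exists_isHomogeneous_isAnisotropic {K : Type*} [Field K] (h : ¬ IsAlgClosed K) (n : ℕ)
    (hn : 1 ≤ n) :
    ∃ (p : MvPolynomial (Fin n) K) (d : ℕ), 0 < d ∧ p.IsHomogeneous d ∧ p.IsAnisotropic := by
  obtain ⟨s, d, hd, hs, hsa⟩ := exists_isHomogeneous_isAnisotropic_binary h
  induction n, hn using Nat.le_induction with
  | base => exact ⟨X 0, 1, one_pos, isHomogeneous_X K 0, isAnisotropic_X 0⟩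
  | succ n _ ih =>
    obtain ⟨p, e, he, hp, hpa⟩ := ih
    exact exists_isHomogeneous_isAnisotropic_succ hd hs hsa he hp hpa

theorem stmt7 {K : Type*} [Field K] (h : ¬ IsAlgClosed K) :
    (∀ n : ℕ, 2 ≤ n → ∃ (p : MvPolynomial (Fin n) K) (d : ℕ), 0 < d ∧
      p.IsHomogeneous d ∧ ∀ v : Fin n → K, MvPolynomial.eval v p = 0 → v = 0) ∧
    ∃ (s : MvPolynomial (Fin 2) K) (d : ℕ), 0 < d ∧ s.IsHomogeneous d ∧
      ∀ a b : K, MvPolynomial.eval ![a, b] s = 0 → a = 0 ∧ b = 0 := by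
  refine ⟨fun n hn ↦ exists_isHomogeneous_isAnisotropic h n (by omega), ?_⟩
  obtain ⟨s, d, hd, hs, hsa⟩ := exists_isHomogeneous_isAnisotropic_binary h
  exact ⟨s, d, hd, hs, fun a b hab ↦ by simpa using hsa _ hab⟩
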